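/- If a positive-definite integral lattice Q represents both the E₈ lattice and ℤ⁸ (the standard cubic lattice of rank 8), then Q represents E₈ ⊕ ℤ⁸. -/

import Mathlib

/-
In a positive-definite lattice, every norm-one vector `v` is orthogonal to an embedded copy
`f : E₈ → Q` of E₈. Since E₈ is unimodular, the functional `x ↦ B v (f x)` on E₈ is `C y` for some
`y ∈ E₈`; then `B (v - f y) (v - f y) = 1 - C y y ≥ 0`, and since E₈ is even this forces `f y = 0`.
Applied to the images of the standard basis of ℤ⁸, the two embeddings have orthogonal images,
so together they embed E₈ ⊕ ℤ⁸.
-/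

open scoped Matrix

/-- Gram matrix of the E₈ root lattice (the E₈ Cartan matrix). -/
def E8Matrix : Matrix (Fin 8) (Fin 8) ℤ :=
  !![ 2, -1,  0,  0,  0,  0,  0,  0;
     -1,  2, -1,  0,  0,  0,  0,  0;
      0, -1,  2, -1,  0,  0,  0,  0;
      0,  0, -1,  2, -1,  0,  0,  0;
      0,  0,  0, -1,  2, -1,  0, -1;
      0,  0,  0,  0, -1,  2, -1,  0;
      0,  0,  0,  0,  0, -1,  2,  0;
      0,  0,  0,  0, -1,  0,  0,  2]

/-- The bilinear form of the E₈ lattice on ℤ⁸. -/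
noncomputable def E8Form : LinearMap.BilinForm ℤ (Fin 8 → ℤ) :=
  Matrix.toBilin' E8Matrix

namespace LinearMap.BilinForm

variable {Q L M : Type*} [AddCommGroup Q] [Module ℤ Q] [AddCommGroup L] [Module ℤ L]
  [AddCommGroup M] [Module ℤ M]

theorem apply_eq_zero_of_self_eq_one_of_even_unimodular (B : LinearMap.BilinForm ℤ Q)
    (hsymm : ∀ x y : Q, B x y = B y x) (hpos : ∀ x : Q, x ≠ 0 → 0 < B x x)
    (C : LinearMap.BilinForm ℤ L) (hC : Function.Surjective C) (heven : ∀ y : L, Even (C y y))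
    (f : L →ₗ[ℤ] Q) (hf : ∀ x y : L, B (f x) (f y) = C x y)
    {v : Q} (hv : B v v = 1) (x : L) : B v (f x) = 0 := by
  obtain ⟨y, hy⟩ := hC (B.compl₂ f v)
  have hrepr : ∀ z : L, B v (f z) = B (f y) (f z) := fun z => by
    rw [hf, hy, compl₂_apply]
  by_cases hfy : f y = 0
  · rw [hrepr, hfy, map_zero, LinearMap.zero_apply]
  have hdiff : B (v - f y) (v - f y) = 1 - B (f y) (f y) := by
    simp only [map_sub, LinearMap.sub_apply, hv, hsymm (f y) v, ← hrepr]
    ring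
  have hnonneg : 0 ≤ B (v - f y) (v - f y) := by
    by_cases h : v - f y = 0
    · simp [h]
    · exact (hpos _ h).le
  have htwo : 2 ≤ B (f y) (f y) := by
    obtain ⟨k, hk⟩ := hf y y ▸ heven y
    have := hpos _ hfy
    omega
  omega

theorem injective_coprod_of_orthogonal (B : LinearMap.BilinForm ℤ Q)
    (hpos : ∀ x : Q, x ≠ 0 → 0 < B x x) {f : L →ₗ[ℤ] Q} {g : M →ₗ[ℤ] Q}
    (hf : Function.Injective f) (hg : Function.Injective g)
    (horth : ∀ x a, B (f x) (g a) = 0) : Function.Injective (f.coprod g) := by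
  rw [injective_iff_map_eq_zero]
  rintro ⟨x, a⟩ h
  simp only [coprod_apply] at h
  have hfx : f x = 0 := by
    by_contra hne
    have hself : B (f x) (f x) = 0 := calc
      B (f x) (f x) = B (f x) (-g a) := by rw [← eq_neg_of_add_eq_zero_left h]
      _ = 0 := by rw [map_neg, horth, neg_zero]
    exact (hpos _ hne).ne' hself
  have hga : g a = 0 := by rwa [hfx, zero_add] at h
  exact Prod.ext ((map_eq_zero_iff f hf).1 hfx) ((map_eq_zero_iff g hg).1 hga)

end LinearMap.BilinForm

def E8Inv : Matrix (Fin 8) (Fin 8) ℤ :=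
  !![2, 3, 4, 5, 6, 4, 2, 3;
     3, 6, 8, 10, 12, 8, 4, 6;
     4, 8, 12, 15, 18, 12, 6, 9;
     5, 10, 15, 20, 24, 16, 8, 12;
     6, 12, 18, 24, 30, 20, 10, 15;
     4, 8, 12, 16, 20, 14, 7, 10;
     2, 4, 6, 8, 10, 7, 4, 5;
     3, 6, 9, 12, 15, 10, 5, 8]

def E8Upper : Matrix (Fin 8) (Fin 8) ℤ :=
  !![1, -1, 0, 0, 0, 0, 0, 0;
     0, 1, -1, 0, 0, 0, 0, 0;
     0, 0, 1, -1, 0, 0, 0, 0;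
     0, 0, 0, 1, -1, 0, 0, 0;
     0, 0, 0, 0, 1, -1, 0, -1;
     0, 0, 0, 0, 0, 1, -1, 0;
     0, 0, 0, 0, 0, 0, 1, 0;
     0, 0, 0, 0, 0, 0, 0, 1]

theorem E8Inv_mul_E8Matrix : E8Inv * E8Matrix = 1 := by decide

theorem E8Matrix_eq_add_transpose : E8Matrix = E8Upper + E8Upperᵀ := by decide

theorem E8Form_apply (x y : Fin 8 → ℤ) : E8Form x y = x ⬝ᵥ E8Matrix *ᵥ y :=
  Matrix.toBilin'_apply' _ _ _

theorem E8Form_self_even (x : Fin 8 → ℤ) : Even (E8Form x x) := by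
  refine ⟨x ⬝ᵥ E8Upper *ᵥ x, ?_⟩
  rw [E8Form_apply, E8Matrix_eq_add_transpose, Matrix.add_mulVec, dotProduct_add,
    Matrix.mulVec_transpose, dotProduct_comm x (x ᵥ* E8Upper), ← Matrix.dotProduct_mulVec]

theorem E8Form_surjective : Function.Surjective E8Form := by
  intro φ
  set c : Fin 8 → ℤ := fun i => φ (Pi.single i 1)
  refine ⟨c ᵥ* E8Inv, (Pi.basisFun ℤ (Fin 8)).ext fun i => ?_⟩
  rw [Pi.basisFun_apply, E8Form_apply, Matrix.dotProduct_mulVec, Matrix.vecMul_vecMul,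
    E8Inv_mul_E8Matrix, Matrix.vecMul_one, dotProduct_single, mul_one]

theorem represents_E8_oplus_Z8_general (Q : Type*) [AddCommGroup Q] [Module ℤ Q]
    (B : LinearMap.BilinForm ℤ Q)
    (hsymm : ∀ x y : Q, B x y = B y x)
    (hpos : ∀ x : Q, x ≠ 0 → 0 < B x x)
    (hE8 : ∃ f : (Fin 8 → ℤ) →ₗ[ℤ] Q, Function.Injective f ∧
      ∀ x y : Fin 8 → ℤ, B (f x) (f y) = E8Form x y)
    (hZ8 : ∃ g : (Fin 8 → ℤ) →ₗ[ℤ] Q, Function.Injective g ∧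
      ∀ a b : Fin 8 → ℤ, B (g a) (g b) = dotProduct a b) :
    ∃ φ : ((Fin 8 → ℤ) × (Fin 8 → ℤ)) →ₗ[ℤ] Q, Function.Injective φ ∧
      ∀ p q : (Fin 8 → ℤ) × (Fin 8 → ℤ),
        B (φ p) (φ q) = E8Form p.1 q.1 + dotProduct p.2 q.2 := by
  obtain ⟨f, hf, hfB⟩ := hE8
  obtain ⟨g, hg, hgB⟩ := hZ8
  have hbasis (i : Fin 8) (x : Fin 8 → ℤ) : B (g (Pi.single i 1)) (f x) = 0 :=
    B.apply_eq_zero_of_self_eq_one_of_even_unimodular hsymm hpos E8Form E8Form_surjective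
      E8Form_self_even f hfB (by rw [hgB, dotProduct_single, Pi.single_eq_same, mul_one]) x
  have hgf : B.compl₁₂ g f = 0 :=
    (Pi.basisFun ℤ (Fin 8)).ext fun i => LinearMap.ext fun x => by simpa using hbasis i x
  have horth (x a : Fin 8 → ℤ) : B (f x) (g a) = 0 := by
    rw [hsymm, ← LinearMap.compl₁₂_apply, hgf, LinearMap.zero_apply, LinearMap.zero_apply]
  refine ⟨f.coprod g, B.injective_coprod_of_orthogonal hpos hf hg horth, fun p q => ?_⟩
  simp only [LinearMap.coprod_apply, map_add, LinearMap.add_apply, hfB, hgB, horth,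
    hsymm (g p.2) (f q.1)]
  ring

/-- If a positive-definite integral lattice Q represents both the E₈
lattice and the standard cubic lattice ℤ⁸, then Q represents E₈ ⊕ ℤ⁸. -/
theorem represents_E8_oplus_Z8 (Q : Type*) [AddCommGroup Q] [Module ℤ Q]
    [Module.Free ℤ Q] [Module.Finite ℤ Q]
    (B : LinearMap.BilinForm ℤ Q)
    (hsymm : ∀ x y : Q, B x y = B y x)
    (hpos : ∀ x : Q, x ≠ 0 → 0 < B x x)
    (hE8 : ∃ f : (Fin 8 → ℤ) →ₗ[ℤ] Q, Function.Injective f ∧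
      ∀ x y : Fin 8 → ℤ, B (f x) (f y) = E8Form x y)
    (hZ8 : ∃ g : (Fin 8 → ℤ) →ₗ[ℤ] Q, Function.Injective g ∧
      ∀ a b : Fin 8 → ℤ, B (g a) (g b) = dotProduct a b) :
    ∃ φ : ((Fin 8 → ℤ) × (Fin 8 → ℤ)) →ₗ[ℤ] Q, Function.Injective φ ∧
      ∀ p q : (Fin 8 → ℤ) × (Fin 8 → ℤ),
        B (φ p) (φ q) = E8Form p.1 q.1 + dotProduct p.2 q.2 :=
  represents_E8_oplus_Z8_general Q B hsymm hpos hE8 hZ8
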